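/- Let σ > 0 and define μ₁(σ) = (√(2σ² + 4σ + 4) − σ − 2)/σ², μ₂(σ) = 1/(σ + 4), λ₁(μ) = (σ + 4)μ − 1 and λ₂(μ) = (σ²μ² + 2(σ + 2)μ − 1)/(1 − σμ). Then: (i) if μ₁(σ) < μ < μ₂(σ), then λ₁(μ) < 0 < λ₂(μ) (the on-diagonal equilibrium d₁ is a saddle); and (ii) if 0 < μ < μ₁(σ), then λ₁(μ) < 0 and λ₂(μ) < 0 (the on-diagonal equilibrium d₁ is a sink). -/

import Mathlib

noncomputable def mu1 (σ : ℝ) : ℝ := (Real.sqrt (2 * σ^2 + 4 * σ + 4) - σ - 2) / σ^2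

noncomputable def mu2 (σ : ℝ) : ℝ := 1 / (σ + 4)

noncomputable def lambda1 (σ μ : ℝ) : ℝ := (σ + 4) * μ - 1

noncomputable def lambda2 (σ μ : ℝ) : ℝ :=
  (σ^2 * μ^2 + 2 * (σ + 2) * μ - 1) / (1 - σ * μ)

/-! The numerator `q μ = σ²μ² + 2(σ + 2)μ - 1` of `λ₂` is a convex quadratic with `q 0 = -1`, and
`μ₁` is its positive root, so for `μ > 0` the sign of `q μ` is the sign of `μ - μ₁`. Below `μ₂`
both `λ₁ < 0` and the denominator `1 - σμ` of `λ₂` is positive, and `q μ₂ > 0` places `μ₁`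
below `μ₂`. -/

noncomputable def lambda2Num (σ μ : ℝ) : ℝ := σ^2 * μ^2 + 2 * (σ + 2) * μ - 1

lemma lambda2_eq_div (σ μ : ℝ) : lambda2 σ μ = lambda2Num σ μ / (1 - σ * μ) := rfl

lemma lambda2Num_sub (σ μ ν : ℝ) :
    lambda2Num σ μ - lambda2Num σ ν = (μ - ν) * (σ^2 * (μ + ν) + 2 * (σ + 2)) := by
  unfold lambda2Num; ring

section mu1

variable {σ : ℝ}

lemma mu1_pos (hσ : σ ≠ 0) : 0 < mu1 σ := by
  have hσ2 : 0 < σ^2 := by positivity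
  have hsqrt : σ + 2 < Real.sqrt (2 * σ^2 + 4 * σ + 4) :=
    Real.lt_sqrt_of_sq_lt (by nlinarith)
  exact div_pos (by linarith) hσ2

lemma lambda2Num_mu1 (hσ : σ ≠ 0) : lambda2Num σ (mu1 σ) = 0 := by
  have hr : Real.sqrt (2 * σ^2 + 4 * σ + 4) ^ 2 = 2 * σ^2 + 4 * σ + 4 :=
    Real.sq_sqrt (by nlinarith [sq_nonneg (σ + 2)])
  unfold lambda2Num mu1
  generalize Real.sqrt (2 * σ^2 + 4 * σ + 4) = r at hr ⊢
  field_simp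
  linear_combination hr

lemma lambda2Num_eq_mul_sub_mu1 (hσ : σ ≠ 0) (μ : ℝ) :
    lambda2Num σ μ = (μ - mu1 σ) * (σ^2 * (μ + mu1 σ) + 2 * (σ + 2)) := by
  rw [← lambda2Num_sub, lambda2Num_mu1 hσ, sub_zero]

lemma mu1_factor_pos (hσ : 0 < σ) {μ : ℝ} (hμ : 0 < μ) :
    0 < σ^2 * (μ + mu1 σ) + 2 * (σ + 2) := by
  have := mu1_pos hσ.ne'
  have : 0 < σ + 2 := by linarith
  positivity

lemma lambda2Num_pos_of_mu1_lt (hσ : 0 < σ) {μ : ℝ} (hμ : mu1 σ < μ) : 0 < lambda2Num σ μ := by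
  rw [lambda2Num_eq_mul_sub_mu1 hσ.ne']
  exact mul_pos (sub_pos.2 hμ) (mu1_factor_pos hσ ((mu1_pos hσ.ne').trans hμ))

lemma lambda2Num_neg_of_lt_mu1 (hσ : 0 < σ) {μ : ℝ} (hμ0 : 0 < μ) (hμ : μ < mu1 σ) :
    lambda2Num σ μ < 0 := by
  rw [lambda2Num_eq_mul_sub_mu1 hσ.ne']
  exact mul_neg_of_neg_of_pos (sub_neg.2 hμ) (mu1_factor_pos hσ hμ0)

end mu1

section mu2

variable {σ μ : ℝ}

lemma lambda1_neg_of_lt_mu2 (hσ : -4 < σ) (hμ : μ < mu2 σ) : lambda1 σ μ < 0 := by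
  rw [mu2, lt_div_iff₀ (by linarith)] at hμ
  unfold lambda1; linarith

lemma one_sub_mul_pos_of_lt_mu2 (hσ : 0 ≤ σ) (hμ : μ < mu2 σ) : 0 < 1 - σ * μ := by
  rw [mu2, lt_div_iff₀ (by linarith)] at hμ
  nlinarith

lemma lambda2Num_mu2_pos (hσ : 0 < σ) : 0 < lambda2Num σ (mu2 σ) := by
  have h : lambda2Num σ (mu2 σ) = (2 * σ^2 + 4 * σ) / (σ + 4)^2 := by
    unfold lambda2Num mu2
    field_simp
    ring
  rw [h]; positivity

lemma mu1_lt_mu2 (hσ : 0 < σ) : mu1 σ < mu2 σ := by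
  have hq := lambda2Num_mu2_pos hσ
  rw [lambda2Num_eq_mul_sub_mu1 hσ.ne'] at hq
  have hμ2 : 0 < mu2 σ := by unfold mu2; positivity
  exact sub_pos.1 (pos_of_mul_pos_left hq (mu1_factor_pos hσ hμ2).le)

end mu2

theorem d1_saddle_or_sink (σ : ℝ) (hσ : 0 < σ) :
    (∀ μ : ℝ, mu1 σ < μ → μ < mu2 σ → lambda1 σ μ < 0 ∧ 0 < lambda2 σ μ) ∧
    (∀ μ : ℝ, 0 < μ → μ < mu1 σ → lambda1 σ μ < 0 ∧ lambda2 σ μ < 0) := by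
  refine ⟨fun μ h1 h2 ↦ ⟨lambda1_neg_of_lt_mu2 (by linarith) h2, ?_⟩,
    fun μ h0 h1 ↦ ?_⟩
  · rw [lambda2_eq_div]
    exact div_pos (lambda2Num_pos_of_mu1_lt hσ h1) (one_sub_mul_pos_of_lt_mu2 hσ.le h2)
  · have h2 : μ < mu2 σ := h1.trans (mu1_lt_mu2 hσ)
    refine ⟨lambda1_neg_of_lt_mu2 (by linarith) h2, ?_⟩
    rw [lambda2_eq_div]
    exact div_neg_of_neg_of_pos (lambda2Num_neg_of_lt_mu1 hσ h0 h1)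
      (one_sub_mul_pos_of_lt_mu2 hσ.le h2)
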